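/- The restriction of y ↦ C_BS(k,y) to [0, √(2k)] is convex and its restriction to [√(2k), ∞) is concave, for any fixed k > 0. -/

import Mathlib

open MeasureTheory Real Filter Asymptotics Set

/-- Standard normal density. -/
noncomputable def phi (z : ℝ) : ℝ := (Real.sqrt (2 * Real.pi))⁻¹ * Real.exp (-z ^ 2 / 2)

/-- Standard normal CDF. -/
noncomputable def Phi (x : ℝ) : ℝ := ∫ z in Set.Iic x, phi z

/-- Black–Scholes normalized call price. -/
noncomputable def CBS (k y : ℝ) : ℝ :=
  if 0 < y then Phi (-k / y + y / 2) - Real.exp k * Phi (-k / y - y / 2)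
  else max (1 - Real.exp k) 0

/-- Implied total standard deviation: inverse of `CBS k` on `[0,∞)`. -/
noncomputable def YBS (k c : ℝ) : ℝ := sInf {y : ℝ | 0 ≤ y ∧ CBS k y = c}

/-- Inverse of the standard normal CDF on (0,1). -/
noncomputable def PhiInv (u : ℝ) : ℝ := sInf {x : ℝ | u ≤ Phi x}

/-- Extended-real quantile with the convention `Φ⁻¹(u) = +∞` for `u ≥ 1`, `-∞` for `u ≤ 0`. -/
noncomputable def PhiInvE (u : ℝ) : EReal :=
  if 1 ≤ u then ⊤ else if u ≤ 0 then ⊥ else ((PhiInv u : ℝ) : EReal)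
/-!
For `y > 0` the `y`-derivative of `C_BS(k, y)` is `φ(d₊)` with `d₊ = -k/y + y/2`: the terms
coming from the moving arguments of the two `Φ`'s cancel because `e^k φ(d₋) = φ(d₊)`. Since
`d₊` is increasing in `y` and changes sign at `y = √(2k)`, while `φ` increases on `(-∞, 0]` and
decreases on `[0, ∞)`, the derivative increases on `(0, √(2k))` and decreases on `(√(2k), ∞)`.
Continuity at `y = 0` comes from `Φ(-∞) = 0`.
-/

open Topology

lemma phi_eq_gaussianPDFReal : phi = ProbabilityTheory.gaussianPDFReal 0 1 := by
  ext z
  simp [phi, ProbabilityTheory.gaussianPDFReal_def]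

lemma continuous_phi : Continuous phi := by
  unfold phi
  fun_prop

lemma integrable_phi : Integrable phi := by
  rw [phi_eq_gaussianPDFReal]
  exact ProbabilityTheory.integrable_gaussianPDFReal 0 1

lemma monotoneOn_phi : MonotoneOn phi (Iic 0) := by
  intro a ha b hb hab
  exact mul_le_mul_of_nonneg_left (exp_le_exp.mpr (by nlinarith [mem_Iic.mp hb])) (by positivity)

lemma antitoneOn_phi : AntitoneOn phi (Ici 0) := by
  intro a ha b hb hab
  exact mul_le_mul_of_nonneg_left (exp_le_exp.mpr (by nlinarith [mem_Ici.mp ha])) (by positivity)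

lemma Phi_sub_Phi (a b : ℝ) : Phi b - Phi a = ∫ t in a..b, phi t :=
  intervalIntegral.integral_Iic_sub_Iic integrable_phi.integrableOn integrable_phi.integrableOn

lemma hasDerivAt_Phi (x : ℝ) : HasDerivAt Phi (phi x) x := by
  have hFTC : HasDerivAt (fun u => ∫ t in (0 : ℝ)..u, phi t) (phi x) x :=
    intervalIntegral.integral_hasDerivAt_right integrable_phi.intervalIntegrable
      continuous_phi.stronglyMeasurable.stronglyMeasurableAtFilter continuous_phi.continuousAt
  refine (hFTC.const_add (Phi 0)).congr_of_eventuallyEq (.of_forall fun u => ?_)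
  show Phi u = Phi 0 + _
  rw [← Phi_sub_Phi]
  ring

lemma tendsto_Phi_atBot : Tendsto Phi atBot (𝓝 0) := by
  have h := (intervalIntegral_tendsto_integral_Iic 0 integrable_phi.integrableOn
    tendsto_id).const_sub (Phi 0)
  simp only [id, ← Phi_sub_Phi, sub_sub_cancel] at h
  change Tendsto Phi atBot (𝓝 (Phi 0 - Phi 0)) at h
  rwa [sub_self] at h

/-- The Black–Scholes `d₊` and `d₋`, as functions of the total standard deviation `y`. -/
noncomputable def dPlus (k y : ℝ) : ℝ := -k / y + y / 2

noncomputable def dMinus (k y : ℝ) : ℝ := -k / y - y / 2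

lemma CBS_of_pos {k y : ℝ} (hy : 0 < y) :
    CBS k y = Phi (dPlus k y) - exp k * Phi (dMinus k y) := if_pos hy

lemma CBS_zero {k : ℝ} (hk : 0 ≤ k) : CBS k 0 = 0 := by
  simp [CBS, one_le_exp hk]

lemma dPlus_eq {k y : ℝ} (hy : y ≠ 0) : dPlus k y = (y ^ 2 - 2 * k) / (2 * y) := by
  unfold dPlus
  field_simp
  ring

lemma dPlus_nonpos {k y : ℝ} (hy : 0 < y) (h : y ≤ √(2 * k)) : dPlus k y ≤ 0 := by
  rw [dPlus_eq hy.ne']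
  have := (le_sqrt' hy).mp h
  exact div_nonpos_of_nonpos_of_nonneg (by linarith) (by linarith)

lemma dPlus_nonneg {k y : ℝ} (hy : 0 < y) (h : √(2 * k) ≤ y) : 0 ≤ dPlus k y := by
  rw [dPlus_eq hy.ne']
  have := (sqrt_le_left hy.le).mp h
  exact div_nonneg (by linarith) (by linarith)

lemma monotoneOn_dPlus {k : ℝ} (hk : 0 ≤ k) : MonotoneOn (dPlus k) (Ioi 0) := by
  intro a ha b hb hab
  have : k / b ≤ k / a := div_le_div_of_nonneg_left hk ha hab
  simp only [dPlus, neg_div]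
  linarith

lemma dMinus_eq_dPlus_sub (k y : ℝ) : dMinus k y = dPlus k y - y := by
  unfold dMinus dPlus
  ring

lemma hasDerivAt_dPlus (k : ℝ) {y : ℝ} (hy : y ≠ 0) :
    HasDerivAt (dPlus k) (k / y ^ 2 + 1 / 2) y := by
  have h := ((hasDerivAt_inv hy).const_mul (-k)).add ((hasDerivAt_id y).div_const 2)
  refine (h.congr_deriv (by ring)).congr_of_eventuallyEq (.of_forall fun t => ?_)
  simp [dPlus, div_eq_mul_inv]

lemma hasDerivAt_dMinus (k : ℝ) {y : ℝ} (hy : y ≠ 0) :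
    HasDerivAt (dMinus k) (k / y ^ 2 - 1 / 2) y := by
  have h := (hasDerivAt_dPlus k hy).sub (hasDerivAt_id y)
  refine (h.congr_deriv (by ring)).congr_of_eventuallyEq (.of_forall fun t => ?_)
  simp [dMinus_eq_dPlus_sub]

lemma tendsto_dPlus_nhdsGT_zero {k : ℝ} (hk : 0 < k) : Tendsto (dPlus k) (𝓝[>] 0) atBot := by
  have hinv : Tendsto (fun y : ℝ => -k * y⁻¹) (𝓝[>] 0) atBot :=
    tendsto_inv_nhdsGT_zero.const_mul_atTop_of_neg (neg_neg_of_pos hk)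
  have hhalf : Tendsto (fun y : ℝ => y / 2) (𝓝[>] 0) (𝓝 0) := by
    simpa using ((continuous_id.div_const 2).tendsto (0 : ℝ)).mono_left nhdsWithin_le_nhds
  exact (hinv.atBot_add hhalf).congr fun y => by simp [dPlus, div_eq_mul_inv]

lemma tendsto_dMinus_nhdsGT_zero {k : ℝ} (hk : 0 < k) : Tendsto (dMinus k) (𝓝[>] 0) atBot := by
  have hneg : Tendsto (fun y : ℝ => -y) (𝓝[>] 0) (𝓝 0) := by
    simpa using (continuous_neg.tendsto (0 : ℝ)).mono_left nhdsWithin_le_nhds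
  exact ((tendsto_dPlus_nhdsGT_zero hk).atBot_add hneg).congr fun y =>
    (dMinus_eq_dPlus_sub k y).symm

lemma exp_mul_phi_dMinus (k : ℝ) {y : ℝ} (hy : y ≠ 0) :
    exp k * phi (dMinus k y) = phi (dPlus k y) := by
  unfold phi dMinus dPlus
  rw [mul_left_comm, ← exp_add]
  congr 2
  field_simp
  ring

lemma hasDerivAt_CBS (k : ℝ) {y : ℝ} (hy : 0 < y) :
    HasDerivAt (CBS k) (phi (dPlus k y)) y := by
  have h := ((hasDerivAt_Phi _).comp y (hasDerivAt_dPlus k hy.ne')).sub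
    (((hasDerivAt_Phi _).comp y (hasDerivAt_dMinus k hy.ne')).const_mul (exp k))
  rw [← mul_assoc, exp_mul_phi_dMinus k hy.ne', ← mul_sub] at h
  refine (h.congr_deriv (by ring)).congr_of_eventuallyEq ?_
  filter_upwards [Ioi_mem_nhds hy] with t ht
  exact CBS_of_pos ht

lemma tendsto_CBS_nhdsGT_zero {k : ℝ} (hk : 0 < k) : Tendsto (CBS k) (𝓝[>] 0) (𝓝 0) := by
  have h := (tendsto_Phi_atBot.comp (tendsto_dPlus_nhdsGT_zero hk)).sub
    ((tendsto_Phi_atBot.comp (tendsto_dMinus_nhdsGT_zero hk)).const_mul (exp k))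
  rw [mul_zero, sub_zero] at h
  exact h.congr' (eventually_nhdsWithin_of_forall fun y hy => (CBS_of_pos hy).symm)

lemma continuousOn_CBS {k : ℝ} (hk : 0 < k) : ContinuousOn (CBS k) (Ici 0) := by
  intro y hy
  rcases (mem_Ici.mp hy).eq_or_lt with rfl | hy
  · rw [← continuousWithinAt_Ioi_iff_Ici, ContinuousWithinAt, CBS_zero hk.le]
    exact tendsto_CBS_nhdsGT_zero hk
  · exact (hasDerivAt_CBS k hy).continuousAt.continuousWithinAt

theorem stmt_11 (k : ℝ) (hk : 0 < k) :
    ConvexOn ℝ (Set.Icc 0 (Real.sqrt (2 * k))) (CBS k) ∧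
    ConcaveOn ℝ (Set.Ici (Real.sqrt (2 * k))) (CBS k) := by
  have hr : 0 ≤ √(2 * k) := sqrt_nonneg _
  have hdiff : DifferentiableOn ℝ (CBS k) (Ioi 0) := fun y hy =>
    (hasDerivAt_CBS k hy).differentiableAt.differentiableWithinAt
  have hderiv : EqOn (phi ∘ dPlus k) (deriv (CBS k)) (Ioi 0) := fun y hy =>
    (hasDerivAt_CBS k hy).deriv.symm
  constructor
  · have hsub : Ioo 0 √(2 * k) ⊆ Ioi 0 := Ioo_subset_Ioi_self
    refine MonotoneOn.convexOn_of_deriv (convex_Icc _ _)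
      ((continuousOn_CBS hk).mono Icc_subset_Ici_self) ?_ ?_ <;> rw [interior_Icc]
    · exact hdiff.mono hsub
    · refine (monotoneOn_phi.comp ((monotoneOn_dPlus hk.le).mono hsub) ?_).congr
        (hderiv.mono hsub)
      exact fun y hy => dPlus_nonpos hy.1 hy.2.le
  · have hsub : Ioi √(2 * k) ⊆ Ioi 0 := Ioi_subset_Ioi hr
    refine AntitoneOn.concaveOn_of_deriv (convex_Ici _)
      ((continuousOn_CBS hk).mono (Ici_subset_Ici.mpr hr)) ?_ ?_ <;> rw [interior_Ici]
    · exact hdiff.mono hsub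
    · refine (antitoneOn_phi.comp_MonotoneOn ((monotoneOn_dPlus hk.le).mono hsub) ?_).congr
        (hderiv.mono hsub)
      exact fun y hy => dPlus_nonneg (hr.trans_lt hy) (le_of_lt hy)
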